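/- arXiv:1601.06723 — 2 statements merged into one kernel-verified Lean document; each statement's English description precedes it below -/
import Mathlib

section
/- Let C₁,…,C_n be matrices with Σᵢ Cᵢ* Cᵢ = 1. Then for positive definite matrices A₁,…,A_n, (Σᵢ Cᵢ* Aᵢ Cᵢ)⁻¹ ≤ Σᵢ Cᵢ* Aᵢ⁻¹ Cᵢ, provided Σᵢ Cᵢ* Aᵢ Cᵢ is invertible. -/
open Matrix
open scoped ComplexOrder Classical

/-- Square root of a positive semidefinite matrix, extended by `0`. -/
noncomputable def msqrt {n : Type*} [Fintype n] [DecidableEq n] (A : Matrix n n ℂ) :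
    Matrix n n ℂ :=
  if h : A.PosSemidef then
    (h.1.eigenvectorUnitary : Matrix n n ℂ) * diagonal ((↑) ∘ (√·) ∘ h.1.eigenvalues) *
      (star h.1.eigenvectorUnitary : Matrix n n ℂ) else 0

/-- Real power of a Hermitian matrix via the functional calculus, extended by `0`. -/
noncomputable def mrpow {n : Type*} [Fintype n] [DecidableEq n] (A : Matrix n n ℂ) (α : ℝ) :
    Matrix n n ℂ :=
  if h : A.IsHermitian then h.cfc (fun t => t ^ α) else 0

/-- A completely positive linear map between matrix algebras (Choi–Kraus form). -/
def IsCPMap {n m : Type*} [Fintype n] [Fintype m] (Φ : Matrix n n ℂ → Matrix m m ℂ) : Prop :=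
  ∃ (r : ℕ) (C : Fin r → Matrix n m ℂ), ∀ X, Φ X = ∑ i, (C i)ᴴ * X * C i

/-- The matrix geometric mean `A^{1/2} (A^{-1/2} B A^{-1/2})^{1/2} A^{1/2}`. -/
noncomputable def geomMean {n : Type*} [Fintype n] [DecidableEq n] (A B : Matrix n n ℂ) :
    Matrix n n ℂ :=
  msqrt A * msqrt ((msqrt A)⁻¹ * B * (msqrt A)⁻¹) * msqrt A

/-- The weighted geometric mean `B^{1/2} (B^{-1/2} A B^{-1/2})^α B^{1/2}`. -/
noncomputable def wgeomMean {n : Type*} [Fintype n] [DecidableEq n] (α : ℝ)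
    (A B : Matrix n n ℂ) : Matrix n n ℂ :=
  msqrt B * mrpow ((msqrt B)⁻¹ * A * (msqrt B)⁻¹) α * msqrt B

/-- The harmonic mean `2 (A⁻¹ + B⁻¹)⁻¹`. -/
noncomputable def harmMean {n : Type*} [Fintype n] [DecidableEq n] (A B : Matrix n n ℂ) :
    Matrix n n ℂ :=
  (2 : ℂ) • (A⁻¹ + B⁻¹)⁻¹

/-!
For `A > 0` the block matrix `[[A, 1], [1, A⁻¹]]` is positive semidefinite, its Schur complement
being `A⁻¹ - A⁻¹ = 0`. Compressing it by `diag(Cᵢ, Cᵢ)` and summing over `i` gives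
`[[S, 1], [1, T]] ≥ 0` with `S = ∑ Cᵢᴴ Aᵢ Cᵢ` and `T = ∑ Cᵢᴴ Aᵢ⁻¹ Cᵢ`, the off-diagonal blocks being
`∑ Cᵢᴴ Cᵢ = 1`. That identity also leaves the `Cᵢ` no common kernel vector, so `S > 0`, and
positivity of this block matrix is equivalent to that of its Schur complement `T - S⁻¹`.
-/

namespace Matrix

section Semiring

variable {ι l m n o α : Type*}

theorem fromBlocks_sum [AddCommMonoid α] (s : Finset ι) (A : ι → Matrix n l α)
    (B : ι → Matrix n m α) (C : ι → Matrix o l α) (D : ι → Matrix o m α) :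
    ∑ i ∈ s, fromBlocks (A i) (B i) (C i) (D i) =
      fromBlocks (∑ i ∈ s, A i) (∑ i ∈ s, B i) (∑ i ∈ s, C i) (∑ i ∈ s, D i) := by
  induction s using Finset.cons_induction with
  | empty => simp
  | cons a s ha ih => simp only [Finset.sum_cons, ih, fromBlocks_add]

theorem conjTranspose_fromBlocks_diag_mul_mul [Fintype m] [Fintype n] [NonUnitalSemiring α]
    [StarRing α] (X : Matrix m n α) (A B C D : Matrix m m α) :
    (fromBlocks X 0 0 X)ᴴ * fromBlocks A B C D * fromBlocks X 0 0 X =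
      fromBlocks (Xᴴ * A * X) (Xᴴ * B * X) (Xᴴ * C * X) (Xᴴ * D * X) := by
  simp [fromBlocks_conjTranspose, fromBlocks_multiply]

theorem exists_mulVec_ne_zero_of_sum_conjTranspose_mul_self_eq_one [Fintype m] [Fintype n]
    [DecidableEq n] [Semiring α] [StarRing α] {s : Finset ι} {X : ι → Matrix m n α}
    (hX : ∑ i ∈ s, (X i)ᴴ * X i = 1) {v : n → α} (hv : v ≠ 0) : ∃ i ∈ s, X i *ᵥ v ≠ 0 := by
  by_contra! h
  refine hv ?_
  calc v = (∑ i ∈ s, (X i)ᴴ * X i) *ᵥ v := by rw [hX, one_mulVec]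
    _ = 0 := by
      rw [sum_mulVec]
      exact Finset.sum_eq_zero fun i hi => by rw [← mulVec_mulVec, h i hi, mulVec_zero]

end Semiring

variable {ι m n K : Type*} [Fintype m] [Fintype n]
  [Field K] [PartialOrder K] [StarRing K] [StarOrderedRing K]

theorem PosDef.posSemidef_fromBlocks_one_inv [DecidableEq m] {A : Matrix m m K}
    (hA : A.PosDef) : (fromBlocks A 1 1 A⁻¹).PosSemidef := by
  have := hA.isUnit.invertible
  simpa using (hA.fromBlocks₁₁ (1 : Matrix m m K) A⁻¹).mpr
    (by simpa using PosSemidef.zero)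

theorem posDef_sum_conjTranspose_mul_mul {s : Finset ι} {A : ι → Matrix m m K}
    {X : ι → Matrix m n K} (hA : ∀ i ∈ s, (A i).PosDef)
    (hX : ∀ v : n → K, v ≠ 0 → ∃ i ∈ s, X i *ᵥ v ≠ 0) :
    (∑ i ∈ s, (X i)ᴴ * A i * X i).PosDef := by
  refine .of_dotProduct_mulVec_pos
    (posSemidef_sum s fun i hi => (hA i hi).posSemidef.conjTranspose_mul_mul_same _).1
    fun v hv => ?_
  obtain ⟨j, hj, hjv⟩ := hX v hv
  have hterm : ∀ i, star v ⬝ᵥ (((X i)ᴴ * A i * X i) *ᵥ v) =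
      star (X i *ᵥ v) ⬝ᵥ (A i *ᵥ (X i *ᵥ v)) := by
    intro i
    simp only [star_mulVec, dotProduct_mulVec, vecMul_vecMul, ← mulVec_mulVec, Matrix.mul_assoc]
  rw [sum_mulVec, dotProduct_sum]
  simp only [hterm]
  exact Finset.sum_pos' (fun i hi => (hA i hi).posSemidef.dotProduct_mulVec_nonneg _)
    ⟨j, hj, (hA j hj).dotProduct_mulVec_pos hjv⟩

end Matrix

open Matrix in
theorem jensen_inv_general {m k : Type*} [Fintype m] [DecidableEq m] [Fintype k] [DecidableEq k]
    (N : ℕ) (C : Fin N → Matrix m k ℂ) (A : Fin N → Matrix m m ℂ)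
    (hA : ∀ i, (A i).PosDef)
    (hC : ∑ i, (C i)ᴴ * C i = 1) :
    ((∑ i, (C i)ᴴ * (A i)⁻¹ * C i) - (∑ i, (C i)ᴴ * A i * C i)⁻¹).PosSemidef := by
  have hS : (∑ i, (C i)ᴴ * A i * C i).PosDef :=
    posDef_sum_conjTranspose_mul_mul (fun i _ => hA i)
      fun _ hv => exists_mulVec_ne_zero_of_sum_conjTranspose_mul_self_eq_one hC hv
  have hblock : (fromBlocks (∑ i, (C i)ᴴ * A i * C i) 1 1
      (∑ i, (C i)ᴴ * (A i)⁻¹ * C i)).PosSemidef := by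
    rw [← hC, ← fromBlocks_sum]
    refine posSemidef_sum _ fun i _ => ?_
    simpa [conjTranspose_fromBlocks_diag_mul_mul] using
      (hA i).posSemidef_fromBlocks_one_inv.conjTranspose_mul_mul_same (fromBlocks (C i) 0 0 (C i))
  have := hS.isUnit.invertible
  have hschur := (hS.fromBlocks₁₁ 1 _).mp (by rwa [conjTranspose_one])
  rwa [conjTranspose_one, Matrix.one_mul, Matrix.mul_one] at hschur

/-- Jensen's operator inequality for the inverse function. -/
theorem jensen_inv {m k : Type*} [Fintype m] [DecidableEq m] [Fintype k] [DecidableEq k]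
    (N : ℕ) (C : Fin N → Matrix m k ℂ) (A : Fin N → Matrix m m ℂ)
    (hA : ∀ i, (A i).PosDef)
    (hC : ∑ i, (C i)ᴴ * C i = 1)
    (hinv : IsUnit (∑ i, (C i)ᴴ * A i * C i)) :
    ((∑ i, (C i)ᴴ * (A i)⁻¹ * C i) - (∑ i, (C i)ᴴ * A i * C i)⁻¹).PosSemidef :=
  jensen_inv_general N C A hA hC
end

section
/- For positive definite matrices A, B and arbitrary matrix C, the map L(A,B,C) = C* G(A,B)⁻¹ C is jointly convex, where G(A,B) = B^{1/2}(B^{-1/2} A B^{-1/2})^{1/2} B^{1/2} is the geometric mean. -/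
open Matrix
open scoped ComplexOrder Classical

/-!
The geometric mean `G = geomMean A B` satisfies `G A⁻¹ G = B`, so by the Schur complement
criterion the block matrix `[[A, G], [G, B]]` is positive semidefinite; conversely every Hermitian
`X` with `[[A, X], [X, B]] ≥ 0` satisfies `X ≤ G`, because after conjugating by `A^{-1/2}` this
reads `Y² ≤ N ⟹ Y ≤ |Y| ≤ √N` (operator monotonicity of the square root). Block positivity is
preserved by convex combinations, hence `G` is jointly concave. Likewise
`[[M, C], [Cᴴ, Cᴴ M⁻¹ C]] ≥ 0` shows that `(M, C) ↦ Cᴴ M⁻¹ C` is jointly convex and antitone in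
`M`; composing it with the concave `G` gives the theorem.
-/

open scoped MatrixOrder Matrix.Norms.L2Operator

lemma CFC.le_sqrt_of_mul_self_le {A : Type*} [CStarAlgebra A] [PartialOrder A] [StarOrderedRing A]
    {a b : A} (ha : IsSelfAdjoint a) (h : a * a ≤ b) : a ≤ CFC.sqrt b :=
  calc a ≤ CFC.abs a := by
        rw [← sub_nonneg, CFC.abs_sub_self a ha]
        exact smul_nonneg (by norm_num) (CFC.negPart_nonneg a)
    _ = CFC.sqrt (a * a) := by rw [CFC.abs, ha.star_eq]
    _ ≤ CFC.sqrt b := CFC.sqrt_le_sqrt _ _ h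

namespace Matrix

variable {m n : Type*}

lemma conjTranspose_smul_add_smul {a b : ℂ} (ha : 0 ≤ a) (hb : 0 ≤ b) (C₁ C₂ : Matrix m n ℂ) :
    (a • C₁ + b • C₂)ᴴ = a • C₁ᴴ + b • C₂ᴴ := by
  rw [conjTranspose_add, conjTranspose_smul, conjTranspose_smul,
    (IsSelfAdjoint.of_nonneg ha).star_eq, (IsSelfAdjoint.of_nonneg hb).star_eq]

lemma PosDef.smul_add_smul {A B : Matrix n n ℂ} (hA : A.PosDef) (hB : B.PosDef) {a b : ℂ}
    (ha : 0 ≤ a) (hb : 0 ≤ b) (hab : a + b = 1) : (a • A + b • B).PosDef := by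
  rcases ha.lt_or_eq with ha | rfl
  · exact (hA.smul ha).add_posSemidef (hB.posSemidef.smul hb)
  · rw [zero_add] at hab
    simpa [hab] using hB

lemma PosSemidef.fromBlocks_smul_add_smul {a b : ℂ} (ha : 0 ≤ a) (hb : 0 ≤ b)
    {A₁ A₂ : Matrix m m ℂ} {C₁ C₂ : Matrix m n ℂ} {D₁ D₂ : Matrix n n ℂ}
    (h₁ : (fromBlocks A₁ C₁ C₁ᴴ D₁).PosSemidef) (h₂ : (fromBlocks A₂ C₂ C₂ᴴ D₂).PosSemidef) :
    (fromBlocks (a • A₁ + b • A₂) (a • C₁ + b • C₂) (a • C₁ + b • C₂)ᴴ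
      (a • D₁ + b • D₂)).PosSemidef := by
  have h := (h₁.smul ha).add (h₂.smul hb)
  rwa [fromBlocks_smul, fromBlocks_smul, fromBlocks_add,
    ← conjTranspose_smul_add_smul ha hb] at h

variable [Fintype m] [Fintype n]

lemma PosSemidef.fromBlocks_zero [DecidableEq m] {P : Matrix m m ℂ} (hP : P.PosSemidef) :
    (fromBlocks P 0 0 (0 : Matrix n n ℂ)).PosSemidef := by
  convert hP.conjTranspose_mul_mul_same (fromCols (1 : Matrix m m ℂ) (0 : Matrix m n ℂ)) using 1
  rw [conjTranspose_fromCols_eq_fromRows_conjTranspose, fromRows_mul, fromRows_mul_fromCols]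
  simp

variable [DecidableEq n]

lemma PosDef.mul_mul_same_of_posDef {A S : Matrix n n ℂ} (hA : A.PosDef) (hS : S.PosDef) :
    (S * A * S).PosDef := by
  simpa only [hS.1.eq] using hA.conjTranspose_mul_mul_same (mulVec_injective_iff_isUnit.2 hS.isUnit)

lemma PosDef.sqrt {A : Matrix n n ℂ} (hA : A.PosDef) : (CFC.sqrt A).PosDef :=
  hA.isStrictlyPositive.sqrt.posDef

lemma PosDef.inv_eq_inv_sqrt_mul_inv_sqrt {A : Matrix n n ℂ} (hA : A.PosDef) :
    A⁻¹ = (CFC.sqrt A)⁻¹ * (CFC.sqrt A)⁻¹ := by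
  rw [← Matrix.mul_inv_rev, CFC.sqrt_mul_sqrt_self A hA.posSemidef.nonneg]

lemma PosSemidef.fromBlocks_conjTranspose_mul_inv_mul {M : Matrix n n ℂ} (hM : M.PosDef)
    (C : Matrix n m ℂ) : (fromBlocks M C Cᴴ (Cᴴ * M⁻¹ * C)).PosSemidef := by
  have := hM.isUnit.invertible
  exact (PosDef.fromBlocks₁₁ C _ hM).2 (by rw [sub_self]; exact .zero)

lemma conjTranspose_mul_inv_mul_convex {M₁ M₂ M : Matrix n n ℂ} (hM₁ : M₁.PosDef)
    (hM₂ : M₂.PosDef) (hM : M.PosDef) {a b : ℂ} (ha : 0 ≤ a) (hb : 0 ≤ b)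
    (hle : a • M₁ + b • M₂ ≤ M) (C₁ C₂ : Matrix n m ℂ) :
    (a • C₁ + b • C₂)ᴴ * M⁻¹ * (a • C₁ + b • C₂) ≤
      a • (C₁ᴴ * M₁⁻¹ * C₁) + b • (C₂ᴴ * M₂⁻¹ * C₂) := by
  have := hM.isUnit.invertible
  have hcomb := PosSemidef.fromBlocks_smul_add_smul ha hb
    (.fromBlocks_conjTranspose_mul_inv_mul hM₁ C₁) (.fromBlocks_conjTranspose_mul_inv_mul hM₂ C₂)
  have hblock := hcomb.add (PosSemidef.fromBlocks_zero (n := m) hle)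
  rw [fromBlocks_add, add_sub_cancel, add_zero, add_zero, add_zero] at hblock
  exact (PosDef.fromBlocks₁₁ _ _ hM).1 hblock

end Matrix

section GeomMean

variable {n : Type*} [Fintype n] [DecidableEq n] {A B : Matrix n n ℂ}

lemma msqrt_eq_sqrt (hA : A.PosSemidef) : msqrt A = CFC.sqrt A := by
  rw [msqrt, dif_pos hA, CFC.sqrt_eq_real_sqrt A hA.nonneg, cfcₙ_eq_cfc, hA.1.cfc_eq]
  rfl

lemma geomMean_eq_sqrt (hA : A.PosDef) (hB : B.PosSemidef) :
    geomMean A B = CFC.sqrt A * CFC.sqrt ((CFC.sqrt A)⁻¹ * B * (CFC.sqrt A)⁻¹) * CFC.sqrt A := by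
  rw [geomMean, msqrt_eq_sqrt hA.posSemidef,
    msqrt_eq_sqrt (hA.sqrt.inv.1.isSelfAdjoint.conjugate_nonneg hB.nonneg).posSemidef]

lemma geomMean_posSemidef (hA : A.PosDef) (hB : B.PosSemidef) : (geomMean A B).PosSemidef := by
  rw [geomMean_eq_sqrt hA hB]
  exact (hA.sqrt.1.isSelfAdjoint.conjugate_nonneg (CFC.sqrt_nonneg _)).posSemidef

lemma geomMean_posDef (hA : A.PosDef) (hB : B.PosDef) : (geomMean A B).PosDef := by
  rw [geomMean_eq_sqrt hA hB.posSemidef]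
  exact (hB.mul_mul_same_of_posDef hA.sqrt.inv).sqrt.mul_mul_same_of_posDef hA.sqrt

lemma geomMean_mul_inv_mul_geomMean (hA : A.PosDef) (hB : B.PosSemidef) :
    geomMean A B * A⁻¹ * geomMean A B = B := by
  have hR := hA.sqrt
  have hAinv := hA.inv_eq_inv_sqrt_mul_inv_sqrt
  set R := CFC.sqrt A
  have := hR.isUnit.invertible
  have hRW : R * R⁻¹ = 1 := mul_inv_of_invertible R
  have hWR : R⁻¹ * R = 1 := inv_mul_of_invertible R
  have hT := CFC.sqrt_mul_sqrt_self (R⁻¹ * B * R⁻¹)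
    (hR.inv.1.isSelfAdjoint.conjugate_nonneg hB.nonneg)
  rw [geomMean_eq_sqrt hA hB, hAinv]
  set T := CFC.sqrt (R⁻¹ * B * R⁻¹)
  calc R * T * R * (R⁻¹ * R⁻¹) * (R * T * R)
      = R * T * (R * R⁻¹) * (R⁻¹ * R) * T * R := by simp only [Matrix.mul_assoc]
    _ = R * (T * T) * R := by rw [hRW, hWR]; simp only [Matrix.mul_one, Matrix.mul_assoc]
    _ = (R * R⁻¹) * B * (R⁻¹ * R) := by rw [hT]; simp only [Matrix.mul_assoc]
    _ = B := by rw [hRW, hWR, Matrix.one_mul, Matrix.mul_one]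

lemma le_geomMean (hA : A.PosDef) (hB : B.PosSemidef) {X : Matrix n n ℂ} (hX : X.IsHermitian)
    (h : X * A⁻¹ * X ≤ B) : X ≤ geomMean A B := by
  have hR := hA.sqrt
  have hAinv := hA.inv_eq_inv_sqrt_mul_inv_sqrt
  set R := CFC.sqrt A
  have hW : IsSelfAdjoint R⁻¹ := hR.inv.1
  have := hR.isUnit.invertible
  have hRW : R * R⁻¹ = 1 := mul_inv_of_invertible R
  have hWR : R⁻¹ * R = 1 := inv_mul_of_invertible R
  have hsq : (R⁻¹ * X * R⁻¹) * (R⁻¹ * X * R⁻¹) = R⁻¹ * (X * A⁻¹ * X) * R⁻¹ := by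
    rw [hAinv]; simp only [Matrix.mul_assoc]
  have hY : R⁻¹ * X * R⁻¹ ≤ CFC.sqrt (R⁻¹ * B * R⁻¹) :=
    CFC.le_sqrt_of_mul_self_le (hX.isSelfAdjoint.conjugate_self hW)
      (hsq ▸ hW.conjugate_le_conjugate h)
  have hX' : R * (R⁻¹ * X * R⁻¹) * R = X := by
    simp only [← Matrix.mul_assoc, hRW, Matrix.one_mul]
    rw [Matrix.mul_assoc, hWR, Matrix.mul_one]
  rw [geomMean_eq_sqrt hA hB, ← hX']
  exact hR.1.isSelfAdjoint.conjugate_le_conjugate hY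

lemma posSemidef_fromBlocks_geomMean (hA : A.PosDef) (hB : B.PosSemidef) :
    (fromBlocks A (geomMean A B) (geomMean A B)ᴴ B).PosSemidef := by
  simpa only [(geomMean_posSemidef hA hB).1.eq, geomMean_mul_inv_mul_geomMean hA hB] using
    PosSemidef.fromBlocks_conjTranspose_mul_inv_mul hA (geomMean A B)

lemma geomMean_concave {A₁ A₂ B₁ B₂ : Matrix n n ℂ} (hA₁ : A₁.PosDef) (hA₂ : A₂.PosDef)
    (hB₁ : B₁.PosSemidef) (hB₂ : B₂.PosSemidef) {a b : ℂ} (ha : 0 ≤ a) (hb : 0 ≤ b)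
    (hab : a + b = 1) :
    a • geomMean A₁ B₁ + b • geomMean A₂ B₂ ≤ geomMean (a • A₁ + b • A₂) (a • B₁ + b • B₂) := by
  have hA := hA₁.smul_add_smul hA₂ ha hb hab
  have := hA.isUnit.invertible
  have hG := ((geomMean_posSemidef hA₁ hB₁).smul ha).add ((geomMean_posSemidef hA₂ hB₂).smul hb)
  have hschur := (PosDef.fromBlocks₁₁ _ _ hA).1 <| PosSemidef.fromBlocks_smul_add_smul ha hb
    (posSemidef_fromBlocks_geomMean hA₁ hB₁) (posSemidef_fromBlocks_geomMean hA₂ hB₂)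
  rw [hG.1.eq] at hschur
  exact le_geomMean hA ((hB₁.smul ha).add (hB₂.smul hb)) hG.1 hschur

end GeomMean

/-- Joint convexity of `L(A,B,C) = C* G(A,B)⁻¹ C` where `G` is the geometric mean
`G(A,B) = B^{1/2}(B^{-1/2} A B^{-1/2})^{1/2} B^{1/2}`. -/
theorem lieb_ruskai_geomMean_convexity {n : Type*} [Fintype n] [DecidableEq n]
    (A₁ A₂ B₁ B₂ C₁ C₂ : Matrix n n ℂ)
    (hA₁ : A₁.PosDef) (hA₂ : A₂.PosDef) (hB₁ : B₁.PosDef) (hB₂ : B₂.PosDef)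
    (l : ℝ) (hl0 : 0 ≤ l) (hl1 : l ≤ 1) :
    (((l : ℂ) • (C₁ᴴ * (geomMean B₁ A₁)⁻¹ * C₁) +
        (1 - (l : ℂ)) • (C₂ᴴ * (geomMean B₂ A₂)⁻¹ * C₂)) -
      ((l : ℂ) • C₁ + (1 - (l : ℂ)) • C₂)ᴴ *
        (geomMean ((l : ℂ) • B₁ + (1 - (l : ℂ)) • B₂)
                  ((l : ℂ) • A₁ + (1 - (l : ℂ)) • A₂))⁻¹ *
        ((l : ℂ) • C₁ + (1 - (l : ℂ)) • C₂)).PosSemidef := by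
  have hl : (0 : ℂ) ≤ l := Complex.zero_le_real.2 hl0
  have hl' : (0 : ℂ) ≤ 1 - l := sub_nonneg.2 (by exact_mod_cast hl1)
  have hsum : (l : ℂ) + (1 - l) = 1 := add_sub_cancel _ _
  have hA := hA₁.smul_add_smul hA₂ hl hl' hsum
  have hB := hB₁.smul_add_smul hB₂ hl hl' hsum
  exact conjTranspose_mul_inv_mul_convex (geomMean_posDef hB₁ hA₁) (geomMean_posDef hB₂ hA₂)
    (geomMean_posDef hB hA) hl hl'
    (geomMean_concave hB₁ hB₂ hA₁.posSemidef hA₂.posSemidef hl hl' hsum) C₁ C₂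
end
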